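/- arXiv:2205.14549 — 6 statements merged into one kernel-verified Lean document; each statement's English description precedes it below -/
import Mathlib

section
/- Let S and Y be finite alphabets and let (S,Y) be jointly distributed with joint pmf P_{S,Y}, with marginals P_S and P_Y assumed strictly positive. Suppose Y is an (ε_l, ε_u)-asymmetric local information private (ALIP) version of S, i.e., for all s ∈ S and y ∈ Y, -ε_l ≤ log(P_{S,Y}(s,y)/(P_S(s)·P_Y(y))) ≤ ε_u, where ε_l, ε_u ≥ 0. Then for all y ∈ Y and all s, s' ∈ S, |log(P_{Y|S}(y|s)/P_{Y|S}(y|s'))| ≤ ε_l + ε_u; in particular P_{Y|S}(y|s)/P_{Y|S}(y|s') ≤ e^{ε_l+ε_u}, i.e., the channel P_{Y|S} satisfies (ε_l+ε_u)-local differential privacy. -/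
open Real BigOperators

/-- ALIP implies (ε_l + ε_u)-local differential privacy. -/
theorem alip_implies_ldp {S Y : Type*} [Fintype S] [Fintype Y]
    (P : S → Y → ℝ) (hPnn : ∀ s y, 0 ≤ P s y) (hPsum : ∑ s, ∑ y, P s y = 1)
    (PS : S → ℝ) (PY : Y → ℝ)
    (hPS : ∀ s, PS s = ∑ y, P s y) (hPY : ∀ y, PY y = ∑ s, P s y)
    (hPSpos : ∀ s, 0 < PS s) (hPYpos : ∀ y, 0 < PY y)
    (εl εu : ℝ) (hεl : 0 ≤ εl) (hεu : 0 ≤ εu)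
    (hALIP : ∀ s y, -εl ≤ Real.log (P s y / (PS s * PY y)) ∧
                    Real.log (P s y / (PS s * PY y)) ≤ εu) :
    ∀ (y : Y) (s s' : S),
      |Real.log ((P s y / PS s) / (P s' y / PS s'))| ≤ εl + εu ∧
      (P s y / PS s) / (P s' y / PS s') ≤ Real.exp (εl + εu) := by
  intro y s s'
  rcases eq_or_lt_of_le (hPnn s y) with ha | ha
  · rw [← ha]
    simp only [zero_div]
    constructor
    · simpa using by linarith
    · exact (Real.exp_pos _).le
  rcases eq_or_lt_of_le (hPnn s' y) with hb | hb
  · rw [← hb]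
    simp only [zero_div, div_zero]
    constructor
    · simpa using by linarith
    · exact (Real.exp_pos _).le
  have hPSs := hPSpos s
  have hPSs' := hPSpos s'
  have hPYy := hPYpos y
  have hx : 0 < P s y / (PS s * PY y) := by positivity
  have hx' : 0 < P s' y / (PS s' * PY y) := by positivity
  have key : (P s y / PS s) / (P s' y / PS s')
      = (P s y / (PS s * PY y)) / (P s' y / (PS s' * PY y)) := by
    field_simp
  have hlog : Real.log ((P s y / PS s) / (P s' y / PS s'))
      = Real.log (P s y / (PS s * PY y)) - Real.log (P s' y / (PS s' * PY y)) := by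
    rw [key, Real.log_div hx.ne' hx'.ne']
  obtain ⟨h1, h2⟩ := hALIP s y
  obtain ⟨h3, h4⟩ := hALIP s' y
  have habs : |Real.log ((P s y / PS s) / (P s' y / PS s'))| ≤ εl + εu := by
    rw [hlog, abs_le]
    constructor <;> linarith
  refine ⟨habs, ?_⟩
  have hpos : 0 < (P s y / PS s) / (P s' y / PS s') := by
    rw [key]; positivity
  calc (P s y / PS s) / (P s' y / PS s')
      = Real.exp (Real.log ((P s y / PS s) / (P s' y / PS s'))) :=
        (Real.exp_log hpos).symm
    _ ≤ Real.exp (εl + εu) := Real.exp_le_exp.mpr (le_of_abs_le habs)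
end

section
/- Let S and Y be finite alphabets, let (S,Y) have joint pmf P_{S,Y} with strictly positive marginals P_S and P_Y, and let α > 1. If the posterior satisfies P_{S|Y}(s|y) ≤ e^{ε_u}·P_S(s) for all s ∈ S and y ∈ Y (ε_u ≥ 0), then the Arimoto mutual information of order α, I_α^A(S;Y) = (α/(α-1)) · log( Σ_{y∈Y} P_Y(y)·‖P_{S|Y}(·|y)‖_α / ‖P_S‖_α ), satisfies I_α^A(S;Y) ≤ (α/(α-1))·ε_u, where ‖v‖_α = (Σ_s v(s)^α)^{1/α}. -/
/-!
Under the max-lift constraint every posterior `P_{S|Y}(·|y)` is pointwise at most `e^{ε_u} P_S`,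
so by monotonicity and homogeneity of the `α`-norm each `‖P_{S|Y}(·|y)‖_α ≤ e^{ε_u} ‖P_S‖_α`.
Averaging over `y` keeps this bound, and taking logarithms gives the claim.
-/

open Real BigOperators

lemma Finset.rpow_sum_rpow_le_mul_of_le_mul {ι : Type*} (s : Finset ι) {p c : ℝ} (hp : 0 < p)
    (hc : 0 ≤ c) {f g : ι → ℝ} (hf : ∀ i ∈ s, 0 ≤ f i) (hg : ∀ i ∈ s, 0 ≤ g i)
    (hfg : ∀ i ∈ s, f i ≤ c * g i) :
    (∑ i ∈ s, f i ^ p) ^ (1 / p) ≤ c * (∑ i ∈ s, g i ^ p) ^ (1 / p) := by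
  have hgp : 0 ≤ ∑ i ∈ s, g i ^ p := Finset.sum_nonneg fun i hi => rpow_nonneg (hg i hi) p
  calc (∑ i ∈ s, f i ^ p) ^ (1 / p)
      ≤ (∑ i ∈ s, (c * g i) ^ p) ^ (1 / p) := by
        gcongr with i hi
        · exact Finset.sum_nonneg fun i hi => rpow_nonneg (hf i hi) p
        · exact hf i hi
        · exact hfg i hi
    _ = (c ^ p * ∑ i ∈ s, g i ^ p) ^ (1 / p) := by
        rw [Finset.mul_sum]
        exact congrArg (· ^ (1 / p)) (Finset.sum_congr rfl fun i hi => mul_rpow hc (hg i hi))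
    _ = c * (∑ i ∈ s, g i ^ p) ^ (1 / p) := by
        rw [mul_rpow (rpow_nonneg hc p) hgp, one_div, rpow_rpow_inv hc hp.ne']

lemma Real.log_div_le_of_le_exp_mul {a b ε : ℝ} (hε : 0 ≤ ε) (ha : 0 ≤ a)
    (hab : a ≤ exp ε * b) : log (a / b) ≤ ε := by
  rcases ha.eq_or_lt with rfl | ha
  · simpa using hε
  have hb : 0 < b := pos_of_mul_pos_right (ha.trans_le hab) (exp_pos ε).le
  rw [log_le_iff_le_exp (div_pos ha hb), div_le_iff₀ hb]
  exact hab

theorem arimoto_mi_le_general {S Y : Type*} [Fintype S] [Fintype Y]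
    (P : S → Y → ℝ) (hPnn : ∀ s y, 0 ≤ P s y) (hPsum : ∑ s, ∑ y, P s y = 1)
    (PS : S → ℝ) (PY : Y → ℝ)
    (hPY : ∀ y, PY y = ∑ s, P s y)
    (hPSpos : ∀ s, 0 < PS s) (hPYpos : ∀ y, 0 < PY y)
    (α : ℝ) (hα : 1 < α)
    (εu : ℝ) (hεu : 0 ≤ εu)
    (hmax : ∀ s y, P s y / PY y ≤ Real.exp εu * PS s) :
    (α / (α - 1)) *
        Real.log ((∑ y, PY y * (∑ s, (P s y / PY y) ^ α) ^ (1/α)) /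
          (∑ s, PS s ^ α) ^ (1/α)) ≤
      (α / (α - 1)) * εu := by
  have hα0 : 0 < α := one_pos.trans hα
  have hpost : ∀ s y, 0 ≤ P s y / PY y := fun s y => div_nonneg (hPnn s y) (hPYpos y).le
  have hPYsum : ∑ y, PY y = 1 := by simp_rw [hPY]; rw [Finset.sum_comm, hPsum]
  have hnorm_le : ∀ y, (∑ s, (P s y / PY y) ^ α) ^ (1 / α)
      ≤ exp εu * (∑ s, PS s ^ α) ^ (1 / α) := fun y =>
    Finset.univ.rpow_sum_rpow_le_mul_of_le_mul hα0 (exp_pos εu).le (fun s _ => hpost s y)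
      (fun s _ => (hPSpos s).le) (fun s _ => hmax s y)
  have havg : ∑ y, PY y * (∑ s, (P s y / PY y) ^ α) ^ (1 / α)
      ≤ exp εu * (∑ s, PS s ^ α) ^ (1 / α) :=
    calc ∑ y, PY y * (∑ s, (P s y / PY y) ^ α) ^ (1 / α)
        ≤ ∑ y, PY y * (exp εu * (∑ s, PS s ^ α) ^ (1 / α)) :=
          Finset.sum_le_sum fun y _ => mul_le_mul_of_nonneg_left (hnorm_le y) (hPYpos y).le
      _ = exp εu * (∑ s, PS s ^ α) ^ (1 / α) := by rw [← Finset.sum_mul, hPYsum, one_mul]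
  refine mul_le_mul_of_nonneg_left (log_div_le_of_le_exp_mul hεu ?_ havg)
    (div_nonneg hα0.le (sub_nonneg.2 hα.le))
  exact Finset.sum_nonneg fun y _ => mul_nonneg (hPYpos y).le
    (rpow_nonneg (Finset.sum_nonneg fun s _ => rpow_nonneg (hpost s y) α) _)

/-- Arimoto mutual information bound under a max-lift constraint. -/
theorem arimoto_mi_le {S Y : Type*} [Fintype S] [Fintype Y]
    (P : S → Y → ℝ) (hPnn : ∀ s y, 0 ≤ P s y) (hPsum : ∑ s, ∑ y, P s y = 1)
    (PS : S → ℝ) (PY : Y → ℝ)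
    (hPS : ∀ s, PS s = ∑ y, P s y) (hPY : ∀ y, PY y = ∑ s, P s y)
    (hPSpos : ∀ s, 0 < PS s) (hPYpos : ∀ y, 0 < PY y)
    (α : ℝ) (hα : 1 < α)
    (εu : ℝ) (hεu : 0 ≤ εu)
    (hmax : ∀ s y, P s y / PY y ≤ Real.exp εu * PS s) :
    (α / (α - 1)) *
        Real.log ((∑ y, PY y * (∑ s, (P s y / PY y) ^ α) ^ (1/α)) /
          (∑ s, PS s ^ α) ^ (1/α)) ≤
      (α / (α - 1)) * εu :=
  arimoto_mi_le_general P hPnn hPsum PS PY hPY hPSpos hPYpos α hα εu hεu hmax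
end

section
/- Let S and Y be finite alphabets, let (S,Y) have joint pmf P_{S,Y} with strictly positive marginals P_S and P_Y, and let α > 1. Suppose P_{S,Y}(s,y) ≤ e^{ε_u}·P_S(s)·P_Y(y) for all s, y (ε_u ≥ 0). Then for every strictly positive pmf Q_Y on Y, the Rényi divergence of order α satisfies D_α(P_{S,Y} ‖ P_S × Q_Y) ≤ (α/(α-1))·ε_u + D_α(P_Y ‖ Q_Y), where D_α(P‖Q) = (1/(α-1)) log Σ P(z)^α Q(z)^{1-α}. -/
open Real BigOperators

/-- Rényi divergence decomposition bound under a max-lift constraint. -/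
theorem renyi_div_le {S Y : Type*} [Fintype S] [Fintype Y]
    (P : S → Y → ℝ) (hPnn : ∀ s y, 0 ≤ P s y) (hPsum : ∑ s, ∑ y, P s y = 1)
    (PS : S → ℝ) (PY : Y → ℝ)
    (hPS : ∀ s, PS s = ∑ y, P s y) (hPY : ∀ y, PY y = ∑ s, P s y)
    (hPSpos : ∀ s, 0 < PS s) (hPYpos : ∀ y, 0 < PY y)
    (α : ℝ) (hα : 1 < α)
    (εu : ℝ) (hεu : 0 ≤ εu)
    (hmax : ∀ s y, P s y ≤ Real.exp εu * (PS s * PY y)) :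
    ∀ QY : Y → ℝ, (∀ y, 0 < QY y) → (∑ y, QY y = 1) →
      (1 / (α - 1)) * Real.log (∑ s, ∑ y, P s y ^ α * (PS s * QY y) ^ (1 - α)) ≤
        (α / (α - 1)) * εu +
          (1 / (α - 1)) * Real.log (∑ y, PY y ^ α * QY y ^ (1 - α)) := by
  intro QY hQpos hQsum
  have hα1 : (0:ℝ) < α - 1 := by linarith
  set A := ∑ s, ∑ y, P s y ^ α * (PS s * QY y) ^ (1 - α) with hAdef
  set B := ∑ y, PY y ^ α * QY y ^ (1 - α) with hBdef
  have hYne : Nonempty Y := by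
    by_contra h
    have : IsEmpty Y := not_nonempty_iff.mp h
    simp at hQsum
  -- termwise bound
  have hterm : ∀ s y, P s y ^ α * (PS s * QY y) ^ (1 - α) ≤
      Real.exp ((α - 1) * εu) * (PY y ^ (α - 1) * QY y ^ (1 - α)) * P s y := by
    intro s y
    have hps := hPSpos s
    have hpy := hPYpos y
    have hq := hQpos y
    rcases eq_or_lt_of_le (hPnn s y) with h0 | hpos
    · rw [← h0, Real.zero_rpow (by positivity : α ≠ 0)]
      simp
    · have h1 : P s y ^ α = P s y ^ (α - 1) * P s y := by
        rw [show α = (α - 1) + 1 by ring, Real.rpow_add hpos, Real.rpow_one]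
        ring_nf
      have h2 : P s y ^ (α - 1) ≤ (Real.exp εu * (PS s * PY y)) ^ (α - 1) :=
        Real.rpow_le_rpow (hPnn s y) (hmax s y) (le_of_lt hα1)
      have hkey : (Real.exp εu * (PS s * PY y)) ^ (α - 1) * (PS s * QY y) ^ (1 - α)
          = Real.exp ((α - 1) * εu) * (PY y ^ (α - 1) * QY y ^ (1 - α)) := by
        rw [Real.mul_rpow (le_of_lt (Real.exp_pos _)) (by positivity),
            Real.mul_rpow (le_of_lt hps) (le_of_lt hpy),
            Real.mul_rpow (le_of_lt hps) (le_of_lt hq),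
            ← Real.exp_mul, mul_comm εu (α - 1)]
        have hps1 : PS s ^ (α - 1) * PS s ^ (1 - α) = 1 := by
          rw [← Real.rpow_add hps]
          norm_num
        linear_combination (Real.exp ((α - 1) * εu) * PY y ^ (α - 1) * QY y ^ (1 - α)) * hps1
      calc P s y ^ α * (PS s * QY y) ^ (1 - α)
          = P s y ^ (α - 1) * (PS s * QY y) ^ (1 - α) * P s y := by rw [h1]; ring
        _ ≤ (Real.exp εu * (PS s * PY y)) ^ (α - 1) * (PS s * QY y) ^ (1 - α) * P s y := by
            apply mul_le_mul_of_nonneg_right _ (hPnn s y)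
            exact mul_le_mul_of_nonneg_right h2 (by positivity)
        _ = Real.exp ((α - 1) * εu) * (PY y ^ (α - 1) * QY y ^ (1 - α)) * P s y := by
            rw [hkey]
  -- sum bound
  have hAB : A ≤ Real.exp ((α - 1) * εu) * B := by
    have step1 : A ≤ ∑ s, ∑ y,
        Real.exp ((α - 1) * εu) * (PY y ^ (α - 1) * QY y ^ (1 - α)) * P s y :=
      Finset.sum_le_sum fun s _ => Finset.sum_le_sum fun y _ => hterm s y
    have step2 : (∑ s, ∑ y,
        Real.exp ((α - 1) * εu) * (PY y ^ (α - 1) * QY y ^ (1 - α)) * P s y)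
        = Real.exp ((α - 1) * εu) * B := by
      rw [Finset.sum_comm]
      have : ∀ y, (∑ s, Real.exp ((α - 1) * εu) * (PY y ^ (α - 1) * QY y ^ (1 - α)) * P s y)
          = Real.exp ((α - 1) * εu) * (PY y ^ α * QY y ^ (1 - α)) := by
        intro y
        rw [← Finset.mul_sum, ← hPY y]
        have : PY y ^ (α - 1) * QY y ^ (1 - α) * PY y = PY y ^ α * QY y ^ (1 - α) := by
          have : PY y ^ (α - 1) * PY y = PY y ^ α := by
            rw [show α = (α - 1) + 1 by ring, Real.rpow_add (hPYpos y), Real.rpow_one]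
            ring_nf
          linear_combination QY y ^ (1 - α) * this
        rw [mul_assoc, this]
      simp_rw [this]
      rw [← Finset.mul_sum]
    calc A ≤ _ := step1
      _ = _ := step2
  -- positivity of A and B
  have hApos : 0 < A := by
    obtain ⟨s, hs⟩ : ∃ s, ∑ y, P s y ≠ 0 := by
      by_contra h
      push_neg at h
      rw [Finset.sum_eq_zero (fun s _ => h s)] at hPsum
      norm_num at hPsum
    obtain ⟨y, hy⟩ : ∃ y, P s y ≠ 0 := by
      by_contra h
      push_neg at h
      exact hs (Finset.sum_eq_zero fun y _ => h y)
    have hpos : 0 < P s y := lt_of_le_of_ne (hPnn s y) (Ne.symm hy)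
    apply Finset.sum_pos'
    · intro i _
      apply Finset.sum_nonneg
      intro j _
      exact mul_nonneg (Real.rpow_nonneg (hPnn i j) α)
        (le_of_lt (Real.rpow_pos_of_pos (mul_pos (hPSpos i) (hQpos j)) _))
    · refine ⟨s, Finset.mem_univ s, Finset.sum_pos' (fun j _ => ?_) ⟨y, Finset.mem_univ y, ?_⟩⟩
      · exact mul_nonneg (Real.rpow_nonneg (hPnn s j) α)
          (le_of_lt (Real.rpow_pos_of_pos (mul_pos (hPSpos s) (hQpos j)) _))
      · exact mul_pos (Real.rpow_pos_of_pos hpos α)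
          (Real.rpow_pos_of_pos (mul_pos (hPSpos s) (hQpos y)) _)
  have hBpos : 0 < B := by
    apply Finset.sum_pos (fun y _ => by have := hPYpos y; have := hQpos y; positivity)
      Finset.univ_nonempty
  -- take logs
  have hlog : Real.log A ≤ (α - 1) * εu + Real.log B := by
    have := Real.log_le_log hApos hAB
    rwa [Real.log_mul (Real.exp_ne_zero _) (ne_of_gt hBpos), Real.log_exp] at this
  have hmul := mul_le_mul_of_nonneg_left hlog (le_of_lt (by positivity : (0:ℝ) < 1 / (α - 1)))
  have heq : (1 / (α - 1)) * ((α - 1) * εu + Real.log B)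
      = εu + (1 / (α - 1)) * Real.log B := by
    field_simp
  rw [heq] at hmul
  have hfrac : εu ≤ (α / (α - 1)) * εu := by
    have h1 : (1:ℝ) ≤ α / (α - 1) := by
      rw [le_div_iff₀ hα1]; linarith
    nlinarith
  linarith
end

section
/- Let S and X be finite alphabets with joint pmf P_{S,X}, strictly positive marginals P_S and P_X, and let X_H ⊆ X be a nonempty subset with P(X_H) = Σ_{x∈X_H} P_X(x) > 0 and P(X_H|s) = Σ_{x∈X_H} P_{X|S}(x|s). Let r_{Y|X} be any randomization mapping X_H into X_H, i.e., r_{Y|X}(y|x) ≥ 0 and Σ_{y∈X_H} r_{Y|X}(y|x) = 1 for each x ∈ X_H. Then it is impossible that for all y ∈ X_H with Σ_{x∈X_H} r_{Y|X}(y|x)P_X(x) > 0 and all s ∈ S, (Σ_{x∈X_H} r_{Y|X}(y|x)P_{X|S}(x|s)) / (Σ_{x∈X_H} r_{Y|X}(y|x)P_X(x)) < max_{s'} P(X_H|s')/P(X_H). Equivalently, the maximum lift achieved over the outputs of any randomization of X_H is at least max_{s} P(X_H|s)/P(X_H). -/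
/-!
For every sensitive value `s`, the output lifts `ℓ(s, y)` are ratios `N y / D y` whose numerators
and denominators sum over `y ∈ X_H` to `P(X_H | s)` and `P(X_H)`, because each row of the
randomization sums to one. By the mediant inequality some output has lift at least
`P(X_H | s) / P(X_H)`; for the maximizing `s` this contradicts the assumption.
-/

theorem Finset.exists_sum_div_sum_le_div {ι 𝕜 : Type*} [Field 𝕜] [LinearOrder 𝕜]
    [IsStrictOrderedRing 𝕜] {t : Finset ι} {N D : ι → 𝕜} (hD : ∀ i ∈ t, 0 ≤ D i)
    (hN : ∀ i ∈ t, D i = 0 → N i = 0) (hsum : 0 < ∑ i ∈ t, D i) :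
    ∃ i ∈ t, 0 < D i ∧ (∑ i ∈ t, N i) / (∑ i ∈ t, D i) ≤ N i / D i := by
  set c := (∑ i ∈ t, N i) / (∑ i ∈ t, D i)
  have hD_filter : ∑ i ∈ t with 0 < D i, D i = ∑ i ∈ t, D i :=
    sum_filter_of_ne fun i hi hDi => (hD i hi).lt_of_ne' hDi
  have hN_filter : ∑ i ∈ t with 0 < D i, N i = ∑ i ∈ t, N i :=
    sum_filter_of_ne fun i hi hNi => (hD i hi).lt_of_ne' fun hDi => hNi (hN i hi hDi)
  have hbalance : ∑ i ∈ t with 0 < D i, c * D i = ∑ i ∈ t with 0 < D i, N i := by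
    rw [← mul_sum, hD_filter, hN_filter, div_mul_cancel₀ _ hsum.ne']
  have hne : ({i ∈ t | 0 < D i} : Finset ι).Nonempty :=
    nonempty_of_sum_ne_zero (hD_filter ▸ hsum.ne')
  obtain ⟨i, hi, hle⟩ := exists_le_of_sum_le hne hbalance.le
  obtain ⟨hit, hDi⟩ := mem_filter.mp hi
  exact ⟨i, hit, hDi, (le_div_iff₀ hDi).mpr hle⟩

namespace Watchdog

variable {X : Type*} {s : Finset X} {r : X → X → ℝ}

def pushforward (s : Finset X) (r : X → X → ℝ) (f : X → ℝ) (y : X) : ℝ :=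
  ∑ x ∈ s, r x y * f x

theorem sum_pushforward (hr : ∀ x ∈ s, ∑ y ∈ s, r x y = 1) (f : X → ℝ) :
    ∑ y ∈ s, pushforward s r f y = ∑ x ∈ s, f x := by
  unfold pushforward
  rw [Finset.sum_comm]
  exact Finset.sum_congr rfl fun x hx => by rw [← Finset.sum_mul, hr x hx, one_mul]

theorem pushforward_nonneg {g : X → ℝ} {y : X} (hr : ∀ x ∈ s, 0 ≤ r x y)
    (hg : ∀ x ∈ s, 0 ≤ g x) : 0 ≤ pushforward s r g y :=
  Finset.sum_nonneg fun x hx => mul_nonneg (hr x hx) (hg x hx)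

theorem pushforward_eq_zero_of_pushforward_eq_zero {g : X → ℝ} {y : X}
    (hr : ∀ x ∈ s, 0 ≤ r x y) (hg : ∀ x ∈ s, 0 < g x) (h : pushforward s r g y = 0)
    (f : X → ℝ) : pushforward s r f y = 0 := by
  have hterm := (Finset.sum_eq_zero_iff_of_nonneg fun x hx =>
    mul_nonneg (hr x hx) (hg x hx).le).mp h
  refine Finset.sum_eq_zero fun x hx => ?_
  have hrx : r x y = 0 := (mul_eq_zero.mp (hterm x hx)).resolve_right (hg x hx).ne'
  rw [hrx, zero_mul]

theorem exists_sum_div_sum_le_pushforward_div (hr_nonneg : ∀ x ∈ s, ∀ y ∈ s, 0 ≤ r x y)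
    (hr_sum : ∀ x ∈ s, ∑ y ∈ s, r x y = 1) {g : X → ℝ} (hg : ∀ x ∈ s, 0 < g x)
    (hg_sum : 0 < ∑ x ∈ s, g x) (f : X → ℝ) :
    ∃ y ∈ s, 0 < pushforward s r g y ∧
      (∑ x ∈ s, f x) / (∑ x ∈ s, g x) ≤ pushforward s r f y / pushforward s r g y := by
  rw [← sum_pushforward hr_sum f, ← sum_pushforward hr_sum g]
  refine Finset.exists_sum_div_sum_le_div
    (fun y hy => pushforward_nonneg (hr_nonneg · · y hy) fun x hx => (hg x hx).le)
    (fun y hy h => pushforward_eq_zero_of_pushforward_eq_zero (hr_nonneg · · y hy) hg h f) ?_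
  rwa [sum_pushforward hr_sum]

end Watchdog

open Real BigOperators

theorem no_randomization_beats_merging_max_general {S X : Type*} [Fintype S] [Fintype X] [Nonempty S]
    (Q : S → X → ℝ)
    (PS : S → ℝ) (PX : X → ℝ)
    (hPXpos : ∀ x, 0 < PX x)
    (XH : Finset X)
    (hPXH : 0 < ∑ x ∈ XH, PX x)
    (r : X → X → ℝ)
    (hrnn : ∀ x ∈ XH, ∀ y ∈ XH, 0 ≤ r x y)
    (hrsum : ∀ x ∈ XH, ∑ y ∈ XH, r x y = 1) :
    ¬ (∀ y ∈ XH, 0 < ∑ x ∈ XH, r x y * PX x →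
        ∀ s : S,
          (∑ x ∈ XH, r x y * (Q s x / PS s)) / (∑ x ∈ XH, r x y * PX x) <
            Finset.univ.sup' Finset.univ_nonempty
              (fun s' => (∑ x ∈ XH, Q s' x / PS s') / (∑ x ∈ XH, PX x))) := by
  intro h
  obtain ⟨s₀, -, hs₀⟩ := Finset.exists_mem_eq_sup' Finset.univ_nonempty
    fun s' => (∑ x ∈ XH, Q s' x / PS s') / (∑ x ∈ XH, PX x)
  obtain ⟨y, hy, hDy, hle⟩ := Watchdog.exists_sum_div_sum_le_pushforward_div hrnn hrsum
    (fun x _ => hPXpos x) hPXH fun x => Q s₀ x / PS s₀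
  have hlt := h y hy hDy s₀
  rw [hs₀] at hlt
  exact hle.not_gt hlt

/-- No randomization of the high-risk set can make every output lift strictly
    smaller than the merged-set max-lift. -/
theorem no_randomization_beats_merging_max {S X : Type*} [Fintype S] [Fintype X] [Nonempty S]
    (Q : S → X → ℝ) (hQnn : ∀ s x, 0 ≤ Q s x) (hQsum : ∑ s, ∑ x, Q s x = 1)
    (PS : S → ℝ) (PX : X → ℝ)
    (hPS : ∀ s, PS s = ∑ x, Q s x) (hPX : ∀ x, PX x = ∑ s, Q s x)
    (hPSpos : ∀ s, 0 < PS s) (hPXpos : ∀ x, 0 < PX x)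
    (XH : Finset X) (hXH : XH.Nonempty)
    (hPXH : 0 < ∑ x ∈ XH, PX x)
    (r : X → X → ℝ)
    (hrnn : ∀ x ∈ XH, ∀ y ∈ XH, 0 ≤ r x y)
    (hrsum : ∀ x ∈ XH, ∑ y ∈ XH, r x y = 1) :
    ¬ (∀ y ∈ XH, 0 < ∑ x ∈ XH, r x y * PX x →
        ∀ s : S,
          (∑ x ∈ XH, r x y * (Q s x / PS s)) / (∑ x ∈ XH, r x y * PX x) <
            Finset.univ.sup' Finset.univ_nonempty
              (fun s' => (∑ x ∈ XH, Q s' x / PS s') / (∑ x ∈ XH, PX x))) :=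
  no_randomization_beats_merging_max_general Q PS PX hPXpos XH hPXH r hrnn hrsum
end

section
/- Let S and X be finite alphabets with joint pmf P_{S,X}, strictly positive marginals P_S and P_X, and let X_H ⊆ X be a nonempty subset with P(X_H) = Σ_{x∈X_H} P_X(x) > 0 and P(X_H|s) = Σ_{x∈X_H} P_{X|S}(x|s). Let r_{Y|X} be any randomization mapping X_H into X_H, i.e., r_{Y|X}(y|x) ≥ 0 and Σ_{y∈X_H} r_{Y|X}(y|x) = 1 for each x ∈ X_H. Then it is impossible that for all y ∈ X_H with Σ_{x∈X_H} r_{Y|X}(y|x)P_X(x) > 0 and all s ∈ S, (Σ_{x∈X_H} r_{Y|X}(y|x)P_{X|S}(x|s)) / (Σ_{x∈X_H} r_{Y|X}(y|x)P_X(x)) > min_{s'} P(X_H|s')/P(X_H). Equivalently, the minimum lift achieved over the outputs of any randomization of X_H is at most min_{s} P(X_H|s)/P(X_H). -/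
/-!
For a fixed `s`, the lifts `ℓ(s, y)` are ratios `n(y) / w(y)` whose numerators and denominators
add up, because `r` is row-stochastic, to `P(X_H | s)` and `P(X_H)`. A sum of fractions with
nonnegative denominators is a mediant of them, so some output `y` with `w(y) > 0` has lift at
most `P(X_H | s) / P(X_H)`; taking `s` to be a minimizer of the merged-set lift gives the claim.
-/

open Finset

section Mediant

variable {ι 𝕜 : Type*} [Field 𝕜] [LinearOrder 𝕜] [IsStrictOrderedRing 𝕜]

theorem exists_div_le_sum_div_sum {s : Finset ι} {n w : ι → 𝕜} (hw : ∀ i ∈ s, 0 ≤ w i)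
    (hn : ∀ i ∈ s, w i = 0 → n i = 0) (hpos : 0 < ∑ i ∈ s, w i) :
    ∃ i ∈ s, 0 < w i ∧ n i / w i ≤ (∑ i ∈ s, n i) / ∑ i ∈ s, w i := by
  set c := (∑ i ∈ s, n i) / ∑ i ∈ s, w i
  have hw_supp : ∑ i ∈ s with 0 < w i, w i = ∑ i ∈ s, w i :=
    sum_filter_of_ne fun i hi hwi => (hw i hi).lt_of_ne' hwi
  have hn_supp : ∑ i ∈ s with 0 < w i, n i = ∑ i ∈ s, n i :=
    sum_filter_of_ne fun i hi hni => (hw i hi).lt_of_ne' fun hwi => hni (hn i hi hwi)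
  have hsupp_nonempty : (s.filter (0 < w ·)).Nonempty :=
    nonempty_of_sum_ne_zero (hw_supp ▸ hpos.ne')
  have hsum : ∑ i ∈ s with 0 < w i, n i ≤ ∑ i ∈ s with 0 < w i, c * w i := by
    rw [← mul_sum, hn_supp, hw_supp, div_mul_cancel₀ _ hpos.ne']
  obtain ⟨i, hi, hle⟩ := exists_le_of_sum_le hsupp_nonempty hsum
  rw [mem_filter] at hi
  exact ⟨i, hi.1, hi.2, (div_le_iff₀ hi.2).mpr hle⟩

theorem sum_mul_eq_zero_of_sum_mul_eq_zero {s : Finset ι} {a p : ι → 𝕜}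
    (ha : ∀ i ∈ s, 0 ≤ a i) (hp : ∀ i ∈ s, 0 < p i) (h : ∑ i ∈ s, a i * p i = 0) (f : ι → 𝕜) :
    ∑ i ∈ s, a i * f i = 0 := by
  have hterm := (sum_eq_zero_iff_of_nonneg fun i hi => mul_nonneg (ha i hi) (hp i hi).le).mp h
  refine sum_eq_zero fun i hi => ?_
  rw [(mul_eq_zero_iff_right (hp i hi).ne').mp (hterm i hi), zero_mul]

end Mediant

theorem sum_sum_mul_eq_sum_of_sum_eq_one {ι R : Type*} [NonAssocSemiring R] {s t : Finset ι}
    {r : ι → ι → R} (hr : ∀ x ∈ s, ∑ y ∈ t, r x y = 1) (f : ι → R) :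
    ∑ y ∈ t, ∑ x ∈ s, r x y * f x = ∑ x ∈ s, f x := by
  rw [sum_comm]
  exact sum_congr rfl fun x hx => by rw [← sum_mul, hr x hx, one_mul]

theorem no_randomization_beats_merging_min_general {S X : Type*} [Fintype S] [Fintype X] [Nonempty S]
    (Q : S → X → ℝ)
    (PS : S → ℝ) (PX : X → ℝ)
    (hPXpos : ∀ x, 0 < PX x)
    (XH : Finset X)
    (hPXH : 0 < ∑ x ∈ XH, PX x)
    (r : X → X → ℝ)
    (hrnn : ∀ x ∈ XH, ∀ y ∈ XH, 0 ≤ r x y)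
    (hrsum : ∀ x ∈ XH, ∑ y ∈ XH, r x y = 1) :
    ¬ (∀ y ∈ XH, 0 < ∑ x ∈ XH, r x y * PX x →
        ∀ s : S,
          (∑ x ∈ XH, r x y * (Q s x / PS s)) / (∑ x ∈ XH, r x y * PX x) >
            Finset.univ.inf' Finset.univ_nonempty
              (fun s' => (∑ x ∈ XH, Q s' x / PS s') / (∑ x ∈ XH, PX x))) := by
  intro h
  obtain ⟨s₀, -, hs₀⟩ := exists_mem_eq_inf' univ_nonempty
    fun s' => (∑ x ∈ XH, Q s' x / PS s') / ∑ x ∈ XH, PX x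
  obtain ⟨y, hy, hwy, hle⟩ := exists_div_le_sum_div_sum
    (n := fun y => ∑ x ∈ XH, r x y * (Q s₀ x / PS s₀)) (w := fun y => ∑ x ∈ XH, r x y * PX x)
    (fun y hy => sum_nonneg fun x hx => mul_nonneg (hrnn x hx y hy) (hPXpos x).le)
    (fun y hy hw0 => sum_mul_eq_zero_of_sum_mul_eq_zero (fun x hx => hrnn x hx y hy)
      (fun x _ => hPXpos x) hw0 _)
    (by rwa [sum_sum_mul_eq_sum_of_sum_eq_one hrsum])
  rw [sum_sum_mul_eq_sum_of_sum_eq_one hrsum, sum_sum_mul_eq_sum_of_sum_eq_one hrsum, ← hs₀] at hle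
  exact (h y hy hwy s₀).not_ge hle

/-- No randomization of the high-risk set can make every output lift strictly
    larger than the merged-set min-lift. -/
theorem no_randomization_beats_merging_min {S X : Type*} [Fintype S] [Fintype X] [Nonempty S]
    (Q : S → X → ℝ) (hQnn : ∀ s x, 0 ≤ Q s x) (hQsum : ∑ s, ∑ x, Q s x = 1)
    (PS : S → ℝ) (PX : X → ℝ)
    (hPS : ∀ s, PS s = ∑ x, Q s x) (hPX : ∀ x, PX x = ∑ s, Q s x)
    (hPSpos : ∀ s, 0 < PS s) (hPXpos : ∀ x, 0 < PX x)
    (XH : Finset X) (hXH : XH.Nonempty)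
    (hPXH : 0 < ∑ x ∈ XH, PX x)
    (r : X → X → ℝ)
    (hrnn : ∀ x ∈ XH, ∀ y ∈ XH, 0 ≤ r x y)
    (hrsum : ∀ x ∈ XH, ∑ y ∈ XH, r x y = 1) :
    ¬ (∀ y ∈ XH, 0 < ∑ x ∈ XH, r x y * PX x →
        ∀ s : S,
          (∑ x ∈ XH, r x y * (Q s x / PS s)) / (∑ x ∈ XH, r x y * PX x) >
            Finset.univ.inf' Finset.univ_nonempty
              (fun s' => (∑ x ∈ XH, Q s' x / PS s') / (∑ x ∈ XH, PX x))) :=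
  no_randomization_beats_merging_min_general Q PS PX hPXpos XH hPXH r hrnn hrsum
end

section
/- Let S and Y be finite alphabets and let (S,Y) have joint pmf P_{S,Y} with strictly positive marginals P_S and P_Y. Suppose Y is an (ε_l, ε_u)-ALIP version of S, i.e., e^{-ε_l} ≤ P_{S,Y}(s,y)/(P_S(s)P_Y(y)) ≤ e^{ε_u} for all s, y, with ε_l, ε_u ≥ 0. Then, taking ε = ε_l + ε_u, the channel P_{Y|S} satisfies ε-local differential privacy, the Shannon mutual information satisfies I(S;Y) ≤ ε_u, the maximal leakage satisfies log Σ_y P_Y(y) max_s ℓ(s,y) ≤ ε_u, and for every α > 1 both the Sibson mutual information I_α^S(S;Y) and the Arimoto mutual information I_α^A(S;Y) are at most (α/(α-1))·ε_u. -/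
/-!
Every quantity in the theorem is an average, or an `α`-power mean, of lift values `ℓ(s, y)`
(after factoring out `P_Y(y)` or `‖P_S‖_α`), so the ALIP upper bound `ℓ ≤ e^{ε_u}` bounds each
of them by `e^{ε_u}` (and the average of `log ℓ` defining `I(S;Y)` by `ε_u`). Local
differential privacy is the ratio `ℓ(s, y) / ℓ(s', y)`, in which `P_Y(y)` cancels.
-/

open Real Finset

lemma Real.log_le_of_le_exp {x c : ℝ} (hc : 0 ≤ c) (hx : 0 ≤ x) (h : x ≤ exp c) : log x ≤ c := by
  rcases hx.eq_or_lt with rfl | hx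
  · simpa using hc
  · exact (log_le_iff_le_exp hx).2 h

lemma div_div_div_le_exp_add_of_lift_bounds {p p' q q' r εl εu : ℝ} (hq : 0 < q) (hq' : 0 < q')
    (hr : 0 < r) (hlow : exp (-εl) ≤ p' / (q' * r)) (hup : p / (q * r) ≤ exp εu) :
    (p / q) / (p' / q') ≤ exp (εl + εu) := by
  have hp' : p' ≠ 0 := by
    rintro rfl
    simp only [zero_div] at hlow
    exact (exp_pos _).not_ge hlow
  calc (p / q) / (p' / q') = (p / (q * r)) / (p' / (q' * r)) := by field_simp
    _ ≤ exp εu / exp (-εl) := div_le_div₀ (exp_pos _).le hup (exp_pos _) hlow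
    _ = exp (εl + εu) := by rw [← exp_sub, sub_neg_eq_add, add_comm]

lemma Finset.sum_mul_le_of_sum_eq_one {ι : Type*} (s : Finset ι) {w x : ι → ℝ} {M : ℝ}
    (hw : ∀ i ∈ s, 0 ≤ w i) (hsum : ∑ i ∈ s, w i = 1) (hx : ∀ i ∈ s, x i ≤ M) :
    ∑ i ∈ s, w i * x i ≤ M :=
  calc ∑ i ∈ s, w i * x i ≤ ∑ i ∈ s, w i * M :=
        sum_le_sum fun i hi => mul_le_mul_of_nonneg_left (hx i hi) (hw i hi)
    _ = M := by rw [← sum_mul, hsum, one_mul]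

lemma Finset.rpow_sum_mul_rpow_le_mul {ι : Type*} (s : Finset ι) {w x y : ι → ℝ} {c α : ℝ}
    (hα : 0 < α) (hc : 0 ≤ c) (hw : ∀ i ∈ s, 0 ≤ w i) (hx : ∀ i ∈ s, 0 ≤ x i)
    (hy : ∀ i ∈ s, 0 ≤ y i) (hxy : ∀ i ∈ s, x i ≤ c * y i) :
    (∑ i ∈ s, w i * x i ^ α) ^ (1 / α) ≤ c * (∑ i ∈ s, w i * y i ^ α) ^ (1 / α) := by
  have hwy : 0 ≤ ∑ i ∈ s, w i * y i ^ α :=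
    sum_nonneg fun i hi => mul_nonneg (hw i hi) (rpow_nonneg (hy i hi) _)
  calc (∑ i ∈ s, w i * x i ^ α) ^ (1 / α)
      ≤ (c ^ α * ∑ i ∈ s, w i * y i ^ α) ^ (1 / α) := by
        refine rpow_le_rpow (sum_nonneg fun i hi => mul_nonneg (hw i hi) (rpow_nonneg (hx i hi) _))
          ?_ (by positivity)
        rw [mul_sum]
        refine sum_le_sum fun i hi => ?_
        rw [mul_left_comm, ← mul_rpow hc (hy i hi)]
        exact mul_le_mul_of_nonneg_left (rpow_le_rpow (hx i hi) (hxy i hi) hα.le) (hw i hi)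
    _ = c * (∑ i ∈ s, w i * y i ^ α) ^ (1 / α) := by
        rw [mul_rpow (by positivity) hwy, ← rpow_mul hc, mul_one_div_cancel hα.ne', rpow_one]

section Leakage

variable {S Y : Type*} [Fintype S] [Fintype Y] {P : S → Y → ℝ} {PS : S → ℝ} {PY : Y → ℝ} {c : ℝ}

lemma mutual_information_le_of_lift_le (hc : 0 ≤ c) (hP : ∀ s y, 0 ≤ P s y)
    (hPsum : ∑ s, ∑ y, P s y = 1) (hPS : ∀ s, 0 ≤ PS s) (hPY : ∀ y, 0 ≤ PY y)
    (hlift : ∀ s y, P s y / (PS s * PY y) ≤ exp c) :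
    ∑ s, ∑ y, P s y * log (P s y / (PS s * PY y)) ≤ c := by
  rw [← Fintype.sum_prod_type'] at hPsum ⊢
  exact univ.sum_mul_le_of_sum_eq_one (fun p _ => hP p.1 p.2) hPsum fun p _ =>
    log_le_of_le_exp hc (div_nonneg (hP p.1 p.2) (mul_nonneg (hPS p.1) (hPY p.2))) (hlift p.1 p.2)

lemma maximal_leakage_le_of_lift_le [Nonempty S] (hc : 0 ≤ c) (hP : ∀ s y, 0 ≤ P s y)
    (hPS : ∀ s, 0 ≤ PS s) (hPY : ∀ y, 0 ≤ PY y) (hPYsum : ∑ y, PY y = 1)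
    (hlift : ∀ s y, P s y / (PS s * PY y) ≤ exp c) :
    log (∑ y, PY y * univ.sup' univ_nonempty fun s => P s y / (PS s * PY y)) ≤ c := by
  have hsup : ∀ y, 0 ≤ univ.sup' univ_nonempty fun s => P s y / (PS s * PY y) := fun y =>
    le_sup'_of_le _ (mem_univ (Classical.arbitrary S))
      (div_nonneg (hP _ y) (mul_nonneg (hPS _) (hPY y)))
  exact log_le_of_le_exp hc (sum_nonneg fun y _ => mul_nonneg (hPY y) (hsup y))
    (univ.sum_mul_le_of_sum_eq_one (fun y _ => hPY y) hPYsum fun y _ =>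
      sup'_le _ _ fun s _ => hlift s y)

lemma sibson_log_le_of_lift_le {α : ℝ} (hc : 0 ≤ c) (hα : 0 < α) (hP : ∀ s y, 0 ≤ P s y)
    (hPS : ∀ s, 0 < PS s) (hPSsum : ∑ s, PS s = 1) (hPY : ∀ y, 0 < PY y)
    (hPYsum : ∑ y, PY y = 1) (hlift : ∀ s y, P s y / (PS s * PY y) ≤ exp c) :
    log (∑ y, (∑ s, PS s * (P s y / PS s) ^ α) ^ (1 / α)) ≤ c := by
  have hcond : ∀ s y, 0 ≤ P s y / PS s := fun s y => div_nonneg (hP s y) (hPS s).le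
  have hterm : ∀ y, (∑ s, PS s * (P s y / PS s) ^ α) ^ (1 / α) ≤ exp c * PY y := fun y => by
    simpa only [one_rpow, mul_one, hPSsum] using univ.rpow_sum_mul_rpow_le_mul (y := fun _ => 1)
      hα (mul_pos (exp_pos c) (hPY y)).le (fun s _ => (hPS s).le) (fun s _ => hcond s y)
      (fun _ _ => zero_le_one) fun s _ => by
        rw [mul_one, ← div_le_iff₀ (hPY y), div_div]
        exact hlift s y
  refine log_le_of_le_exp hc (sum_nonneg fun y _ => rpow_nonneg (sum_nonneg fun s _ =>
    mul_nonneg (hPS s).le (rpow_nonneg (hcond s y) _)) _) ?_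
  calc ∑ y, (∑ s, PS s * (P s y / PS s) ^ α) ^ (1 / α) ≤ ∑ y, exp c * PY y :=
        sum_le_sum fun y _ => hterm y
    _ = exp c := by rw [← mul_sum, hPYsum, mul_one]

lemma arimoto_log_le_of_lift_le {α : ℝ} (hc : 0 ≤ c) (hα : 0 < α) (hP : ∀ s y, 0 ≤ P s y)
    (hPS : ∀ s, 0 < PS s) (hPY : ∀ y, 0 < PY y) (hPYsum : ∑ y, PY y = 1)
    (hlift : ∀ s y, P s y / (PS s * PY y) ≤ exp c) :
    log ((∑ y, PY y * (∑ s, (P s y / PY y) ^ α) ^ (1 / α)) / (∑ s, PS s ^ α) ^ (1 / α)) ≤ c := by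
  have hcond : ∀ s y, 0 ≤ P s y / PY y := fun s y => div_nonneg (hP s y) (hPY y).le
  have hnorm : 0 ≤ (∑ s, PS s ^ α) ^ (1 / α) :=
    rpow_nonneg (sum_nonneg fun s _ => rpow_nonneg (hPS s).le _) _
  have hterm : ∀ y, (∑ s, (P s y / PY y) ^ α) ^ (1 / α) ≤ exp c * (∑ s, PS s ^ α) ^ (1 / α) :=
    fun y => by
      simpa only [one_mul] using univ.rpow_sum_mul_rpow_le_mul (w := fun _ => 1) hα
        (exp_pos c).le (fun _ _ => zero_le_one) (fun s _ => hcond s y)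
        (fun s _ => (hPS s).le) fun s _ => by
          rw [← div_le_iff₀ (hPS s), div_div, mul_comm]
          exact hlift s y
  refine log_le_of_le_exp hc (div_nonneg (sum_nonneg fun y _ => mul_nonneg (hPY y).le <|
    rpow_nonneg (sum_nonneg fun s _ => rpow_nonneg (hcond s y) _) _) hnorm) ?_
  exact div_le_of_le_mul₀ hnorm (exp_pos c).le <| univ.sum_mul_le_of_sum_eq_one
    (fun y _ => (hPY y).le) hPYsum fun y _ => hterm y

end Leakage

theorem alip_properties_general {S Y : Type*} [Fintype S] [Fintype Y] [Nonempty S]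
    (P : S → Y → ℝ) (hPnn : ∀ s y, 0 ≤ P s y) (hPsum : ∑ s, ∑ y, P s y = 1)
    (PS : S → ℝ) (PY : Y → ℝ)
    (hPS : ∀ s, PS s = ∑ y, P s y) (hPY : ∀ y, PY y = ∑ s, P s y)
    (hPSpos : ∀ s, 0 < PS s) (hPYpos : ∀ y, 0 < PY y)
    (εl εu : ℝ) (hεu : 0 ≤ εu)
    (hALIP : ∀ s y, Real.exp (-εl) ≤ P s y / (PS s * PY y) ∧
                    P s y / (PS s * PY y) ≤ Real.exp εu) :
    (∀ (y : Y) (s s' : S),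
        (P s y / PS s) / (P s' y / PS s') ≤ Real.exp (εl + εu)) ∧
    (∑ s, ∑ y, P s y * Real.log (P s y / (PS s * PY y)) ≤ εu) ∧
    (Real.log (∑ y, PY y *
        Finset.univ.sup' Finset.univ_nonempty (fun s => P s y / (PS s * PY y))) ≤ εu) ∧
    (∀ α : ℝ, 1 < α →
      (α / (α - 1)) * Real.log (∑ y, (∑ s, PS s * (P s y / PS s) ^ α) ^ (1/α)) ≤
          (α / (α - 1)) * εu ∧
      (α / (α - 1)) * Real.log ((∑ y, PY y * (∑ s, (P s y / PY y) ^ α) ^ (1/α)) /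
            (∑ s, PS s ^ α) ^ (1/α)) ≤
          (α / (α - 1)) * εu) := by
  have hPSsum : ∑ s, PS s = 1 := by simpa only [← hPS] using hPsum
  have hPYsum : ∑ y, PY y = 1 := by simpa only [sum_comm (γ := S), ← hPY] using hPsum
  have hlift : ∀ s y, P s y / (PS s * PY y) ≤ exp εu := fun s y => (hALIP s y).2
  refine ⟨fun y s s' => div_div_div_le_exp_add_of_lift_bounds (hPSpos s) (hPSpos s') (hPYpos y)
      (hALIP s' y).1 (hALIP s y).2,
    mutual_information_le_of_lift_le hεu hPnn hPsum (fun s => (hPSpos s).le)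
      (fun y => (hPYpos y).le) hlift,
    maximal_leakage_le_of_lift_le hεu hPnn (fun s => (hPSpos s).le) (fun y => (hPYpos y).le)
      hPYsum hlift,
    fun α hα => ?_⟩
  have hα0 : 0 < α := by linarith
  have hcoef : 0 ≤ α / (α - 1) := div_nonneg hα0.le (by linarith)
  exact ⟨mul_le_mul_of_nonneg_left (sibson_log_le_of_lift_le hεu hα0 hPnn hPSpos hPSsum hPYpos
      hPYsum hlift) hcoef,
    mul_le_mul_of_nonneg_left (arimoto_log_le_of_lift_le hεu hα0 hPnn hPSpos hPYpos hPYsum hlift)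
      hcoef⟩

/-- Properties of an (ε_l, ε_u)-ALIP private release: LDP, mutual information,
    maximal leakage, Sibson MI, and Arimoto MI bounds. -/
theorem alip_properties {S Y : Type*} [Fintype S] [Fintype Y] [Nonempty S]
    (P : S → Y → ℝ) (hPnn : ∀ s y, 0 ≤ P s y) (hPsum : ∑ s, ∑ y, P s y = 1)
    (PS : S → ℝ) (PY : Y → ℝ)
    (hPS : ∀ s, PS s = ∑ y, P s y) (hPY : ∀ y, PY y = ∑ s, P s y)
    (hPSpos : ∀ s, 0 < PS s) (hPYpos : ∀ y, 0 < PY y)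
    (εl εu : ℝ) (hεl : 0 ≤ εl) (hεu : 0 ≤ εu)
    (hALIP : ∀ s y, Real.exp (-εl) ≤ P s y / (PS s * PY y) ∧
                    P s y / (PS s * PY y) ≤ Real.exp εu) :
    (∀ (y : Y) (s s' : S),
        (P s y / PS s) / (P s' y / PS s') ≤ Real.exp (εl + εu)) ∧
    (∑ s, ∑ y, P s y * Real.log (P s y / (PS s * PY y)) ≤ εu) ∧
    (Real.log (∑ y, PY y *
        Finset.univ.sup' Finset.univ_nonempty (fun s => P s y / (PS s * PY y))) ≤ εu) ∧
    (∀ α : ℝ, 1 < α →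
      (α / (α - 1)) * Real.log (∑ y, (∑ s, PS s * (P s y / PS s) ^ α) ^ (1/α)) ≤
          (α / (α - 1)) * εu ∧
      (α / (α - 1)) * Real.log ((∑ y, PY y * (∑ s, (P s y / PY y) ^ α) ^ (1/α)) /
            (∑ s, PS s ^ α) ^ (1/α)) ≤
          (α / (α - 1)) * εu) :=
  alip_properties_general P hPnn hPsum PS PY hPS hPY hPSpos hPYpos εl εu hεu hALIP
end
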